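/- Let f, g be negative real numbers and ρ a real number with ρ ∉ {0, 1/2}. Then: (a) the quadratic equation (g²/(2ρ−1)²)·t² + (f² + 2fg²)·t + 2f³ = 0 has exactly one positive real root t₊ (and it is a simple root); and (b) for every ω > 0, the polynomial ρx² − γ(ω)x + (1−ρ) has a root of absolute value 1 (i.e. a root of the form e^{iθ} with θ real) if and only if ω² = t₊. In particular there is a unique ω₊ > 0 (namely ω₊ = √t₊) at which the quadratic has a unimodular root. -/

import Mathlib

/-! A unimodular `z` is a root of `ρz² − γz + (1 − ρ)` exactly when `γ = ρz + (1 − ρ)z̄`, i.e.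
`Re γ = Re z` and `Im γ = (2ρ − 1) Im z`; so such a root exists iff
`(Re γ)² + (Im γ / (2ρ − 1))² = 1`. For `γ = γ(ω)` this quantity minus one is `ω²/D²`
(with `D = f² + ω²g²`) times the value of `(g²/(2ρ−1)²)t² + (f² + 2fg²)t + 2f³` at `t = ω²`.
That quadratic has a positive leading and a negative constant coefficient, hence exactly one
positive root, and that root is simple. -/

/-- `γ(ω) = (f + iωg + ω²)/(f + iωg)`. -/
noncomputable def gam (f g ω : ℝ) : ℂ :=
  ((f : ℂ) + Complex.I * ω * g + (ω : ℂ) ^ 2) / ((f : ℂ) + Complex.I * ω * g)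

open Complex ComplexConjugate

lemma existsUnique_pos_root_of_pos_of_neg {a b c : ℝ} (ha : 0 < a) (hc : c < 0) :
    ∃! t : ℝ, 0 < t ∧ a * t ^ 2 + b * t + c = 0 := by
  set s := √(discrim a b c)
  have hdisc : b ^ 2 < discrim a b c := by rw [discrim]; nlinarith
  have hs : discrim a b c = s * s := (Real.mul_self_sqrt ((sq_nonneg b).trans hdisc.le)).symm
  have hbs : |b| < s := by
    rw [← Real.sqrt_sq_eq_abs]; exact Real.sqrt_lt_sqrt (sq_nonneg b) hdisc
  have hroot (t : ℝ) :
      a * t ^ 2 + b * t + c = 0 ↔ t = (-b + s) / (2 * a) ∨ t = (-b - s) / (2 * a) := by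
    rw [sq, quadratic_eq_zero_iff ha.ne' hs]
  have hpos : 0 < (-b + s) / (2 * a) := div_pos (by linarith [le_abs_self b]) (by positivity)
  have hneg : (-b - s) / (2 * a) < 0 :=
    div_neg_of_neg_of_pos (by linarith [neg_abs_le b]) (by positivity)
  refine ⟨(-b + s) / (2 * a), ⟨hpos, (hroot _).2 (Or.inl rfl)⟩, ?_⟩
  rintro t ⟨ht, h⟩
  rcases (hroot t).1 h with rfl | rfl
  · rfl
  · linarith

lemma two_mul_add_ne_zero_of_root {a b c t : ℝ} (ha : 0 ≤ a) (hc : c < 0)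
    (h : a * t ^ 2 + b * t + c = 0) : 2 * a * t + b ≠ 0 := by
  intro hderiv
  have : c = a * t ^ 2 := by linear_combination h - t * hderiv
  nlinarith [sq_nonneg t]

lemma quadratic_eq_mul_of_norm_eq_one (ρ : ℝ) (γ : ℂ) {z : ℂ} (hz : ‖z‖ = 1) :
    (ρ : ℂ) * z ^ 2 - γ * z + (1 - ρ) = z * (ρ * z + (1 - ρ) * conj z - γ) := by
  have hzz : z * conj z = 1 := by rw [mul_conj, normSq_eq_norm_sq, hz]; norm_num
  linear_combination ((ρ : ℂ) - 1) * hzz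

lemma exists_norm_eq_one_root_iff {ρ : ℝ} (hρ : 2 * ρ - 1 ≠ 0) (γ : ℂ) :
    (∃ z : ℂ, ‖z‖ = 1 ∧ (ρ : ℂ) * z ^ 2 - γ * z + (1 - ρ) = 0) ↔
      γ.re ^ 2 + (γ.im / (2 * ρ - 1)) ^ 2 = 1 := by
  have hnorm (z : ℂ) : ‖z‖ = 1 ↔ z.re ^ 2 + z.im ^ 2 = 1 := by
    rw [norm_def, Real.sqrt_eq_one, normSq_apply]
    ring_nf
  have hγ (z : ℂ) : γ = ρ * z + (1 - ρ) * conj z ↔ γ.re = z.re ∧ γ.im = (2 * ρ - 1) * z.im := by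
    rw [Complex.ext_iff]
    simp only [add_re, mul_re, ofReal_re, ofReal_im, zero_mul, sub_zero, sub_re, one_re, conj_re,
      sub_im, one_im, sub_self, conj_im, mul_neg, neg_zero, add_im, mul_im, add_zero]
    constructor <;> rintro ⟨h1, h2⟩ <;> exact ⟨by linarith, by linarith⟩
  constructor
  · rintro ⟨z, hz, hroot⟩
    have hz0 : z ≠ 0 := by rintro rfl; simp at hz
    rw [quadratic_eq_mul_of_norm_eq_one ρ γ hz, mul_eq_zero, sub_eq_zero] at hroot
    obtain ⟨hre, him⟩ := (hγ z).1 (hroot.resolve_left hz0).symm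
    rw [hre, him, mul_div_cancel_left₀ _ hρ, ← (hnorm z)]; exact hz
  · intro h
    set z : ℂ := ⟨γ.re, γ.im / (2 * ρ - 1)⟩
    have hz : ‖z‖ = 1 := (hnorm z).2 h
    refine ⟨z, hz, ?_⟩
    rw [quadratic_eq_mul_of_norm_eq_one ρ γ hz, sub_eq_zero.2 ((hγ z).2 ⟨rfl, ?_⟩).symm, mul_zero]
    exact (mul_div_cancel₀ _ hρ).symm

lemma gam_re (f g ω : ℝ) (hf : f ≠ 0) :
    (gam f g ω).re = 1 + ω ^ 2 * f / (f ^ 2 + ω ^ 2 * g ^ 2) := by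
  have hD : f ^ 2 + ω ^ 2 * g ^ 2 ≠ 0 := by positivity
  simp only [gam, sq, div_re, add_re, ofReal_re, mul_re, I_re, zero_mul, I_im, ofReal_im, mul_zero,
    sub_self, mul_im, one_mul, zero_add, add_zero, sub_zero, normSq_apply, add_im]
  field_simp
  ring

lemma gam_im (f g ω : ℝ) (hf : f ≠ 0) :
    (gam f g ω).im = -(ω ^ 3 * g) / (f ^ 2 + ω ^ 2 * g ^ 2) := by
  have hD : f ^ 2 + ω ^ 2 * g ^ 2 ≠ 0 := by positivity
  simp only [gam, sq, div_im, add_im, ofReal_im, mul_im, mul_re, I_re, ofReal_re, zero_mul, I_im,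
    mul_zero, sub_self, one_mul, zero_add, add_zero, add_re, normSq_apply, sub_zero]
  field_simp
  ring

lemma gam_norm_condition_iff {f g ρ ω : ℝ} (hf : f ≠ 0) (hω : ω ≠ 0) (hρ : 2 * ρ - 1 ≠ 0) :
    (gam f g ω).re ^ 2 + ((gam f g ω).im / (2 * ρ - 1)) ^ 2 = 1 ↔
      g ^ 2 / (2 * ρ - 1) ^ 2 * (ω ^ 2) ^ 2 + (f ^ 2 + 2 * f * g ^ 2) * ω ^ 2 + 2 * f ^ 3 = 0 := by
  set D := f ^ 2 + ω ^ 2 * g ^ 2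
  have hD : D ≠ 0 := by positivity
  have key : (gam f g ω).re ^ 2 + ((gam f g ω).im / (2 * ρ - 1)) ^ 2 - 1 =
      ω ^ 2 / D ^ 2 *
        (g ^ 2 / (2 * ρ - 1) ^ 2 * (ω ^ 2) ^ 2 + (f ^ 2 + 2 * f * g ^ 2) * ω ^ 2 + 2 * f ^ 3) := by
    rw [gam_re f g ω hf, gam_im f g ω hf]
    field_simp
    ring
  rw [← sub_eq_zero, key, mul_eq_zero, or_iff_right (by positivity)]

theorem stmt_18_general (f g : ℝ) (hf : f < 0) (hg : g < 0) (ρ : ℝ)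
    (hρhalf : ρ ≠ 1 / 2) :
    ∃ t : ℝ, 0 < t ∧
      (g ^ 2 / (2 * ρ - 1) ^ 2) * t ^ 2 + (f ^ 2 + 2 * f * g ^ 2) * t + 2 * f ^ 3 = 0 ∧
      2 * (g ^ 2 / (2 * ρ - 1) ^ 2) * t + (f ^ 2 + 2 * f * g ^ 2) ≠ 0 ∧
      (∀ t' : ℝ, 0 < t' →
        (g ^ 2 / (2 * ρ - 1) ^ 2) * t' ^ 2 + (f ^ 2 + 2 * f * g ^ 2) * t' + 2 * f ^ 3 = 0 →
        t' = t) ∧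
      (∀ ω : ℝ, 0 < ω →
        ((∃ z : ℂ, ‖z‖ = 1 ∧
            (ρ : ℂ) * z ^ 2 - gam f g ω * z + (1 - (ρ : ℂ)) = 0) ↔ ω ^ 2 = t)) := by
  have hρ : 2 * ρ - 1 ≠ 0 := fun h ↦ hρhalf (by linarith)
  have hlead : 0 < g ^ 2 / (2 * ρ - 1) ^ 2 := div_pos (sq_pos_of_neg hg) (sq_pos_of_ne_zero hρ)
  have hconst : 2 * f ^ 3 < 0 := by nlinarith [pow_pos (neg_pos.2 hf) 3]
  obtain ⟨t, ⟨ht, hroot⟩, huniq⟩ :=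
    existsUnique_pos_root_of_pos_of_neg (b := f ^ 2 + 2 * f * g ^ 2) hlead hconst
  refine ⟨t, ht, hroot, two_mul_add_ne_zero_of_root hlead.le hconst hroot,
    fun t' ht' h' ↦ huniq t' ⟨ht', h'⟩, fun ω hω ↦ ?_⟩
  rw [exists_norm_eq_one_root_iff hρ, gam_norm_condition_iff hf.ne hω.ne' hρ]
  exact ⟨fun h ↦ huniq _ ⟨by positivity, h⟩, fun h ↦ h ▸ hroot⟩

theorem stmt_18 (f g : ℝ) (hf : f < 0) (hg : g < 0) (ρ : ℝ)
    (hρ0 : ρ ≠ 0) (hρhalf : ρ ≠ 1 / 2) :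
    ∃ t : ℝ, 0 < t ∧
      (g ^ 2 / (2 * ρ - 1) ^ 2) * t ^ 2 + (f ^ 2 + 2 * f * g ^ 2) * t + 2 * f ^ 3 = 0 ∧
      2 * (g ^ 2 / (2 * ρ - 1) ^ 2) * t + (f ^ 2 + 2 * f * g ^ 2) ≠ 0 ∧
      (∀ t' : ℝ, 0 < t' →
        (g ^ 2 / (2 * ρ - 1) ^ 2) * t' ^ 2 + (f ^ 2 + 2 * f * g ^ 2) * t' + 2 * f ^ 3 = 0 →
        t' = t) ∧
      (∀ ω : ℝ, 0 < ω →
        ((∃ z : ℂ, ‖z‖ = 1 ∧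
            (ρ : ℂ) * z ^ 2 - gam f g ω * z + (1 - (ρ : ℂ)) = 0) ↔ ω ^ 2 = t)) :=
  stmt_18_general f g hf hg ρ hρhalf
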